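/- arXiv:0902.1261 — 2 statements merged into one kernel-verified Lean document; each statement's English description precedes it below -/
import Mathlib

section
/- Let d be a dissimilarity on a nonempty finite set X. Then there exists a Robinsonian dissimilarity d_R on X such that ‖d − d_R‖∞ ≤ ‖d − d'‖∞ for every Robinsonian dissimilarity d' on X; moreover, this minimum value ‖d − d_R‖∞ equals ½|d(x,y) − d(x',y')| for some elements x,y,x',y' ∈ X. -/
open Finset

variable {X : Type*}

/-- A dissimilarity on `X`: symmetric, nonnegative, zero on the diagonal. -/
def IsDissimilarity (d : X → X → ℝ) : Prop :=
  (∀ x y, d x y = d y x) ∧ (∀ x y, 0 ≤ d x y) ∧ (∀ x, d x x = 0)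

/-- Here `le` stands for the reflexive closure `⪯` of a linear order `≺` on `X`.
`EpsCompatible d le ε` says that the order is `ε`-compatible with `d`, i.e.
`d u v ≤ d x y + 2ε` whenever `x ⪯ u ⪯ v ⪯ y`. -/
def EpsCompatible (d : X → X → ℝ) (le : X → X → Prop) (ε : ℝ) : Prop :=
  ∀ x u v y, le x u → le u v → le v y → d u v ≤ d x y + 2 * ε

/-- The `l∞`-distance `‖d - d'‖∞ = max_{x,y} |d x y - d' x y|`. -/
noncomputable def linfDist [Fintype X] [Nonempty X] (d d' : X → X → ℝ) : ℝ :=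
  (Finset.univ : Finset (X × X)).sup' Finset.univ_nonempty
    fun p => |d p.1 p.2 - d' p.1 p.2|

/-- A dissimilarity is Robinsonian if it admits a compatible linear order. -/
def IsRobinsonian (d : X → X → ℝ) : Prop :=
  ∃ le : X → X → Prop, IsLinearOrder X le ∧ EpsCompatible d le 0

/-!
For a linear order `≤` on `X`, let `ε(≤)` be the least `ε ≥ 0` for which `≤` is
`ε`-compatible with `d`; it is a maximum, hence of the form `(d u v - d x y) / 2`.
If `d'` is Robinsonian for `≤'`, the triangle inequality makes `≤'` `‖d - d'‖∞`-compatible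
with `d`, so `ε(≤') ≤ ‖d - d'‖∞`. Conversely, if `≤` is `ε`-compatible with `d`, the
`d`-diameters of the intervals of `≤` are monotone under inclusion and exceed `d` by at most
`2ε`; lowering them by `ε` (and truncating at `0`) gives a dissimilarity compatible with `≤`
within `ε` of `d`. An order minimizing `ε(≤)`, which exists as there are finitely many
orders, therefore yields a closest Robinsonian dissimilarity, at distance `ε(≤)`.
-/

noncomputable abbrev IsLinearOrder.toLinearOrder (le : X → X → Prop) [IsLinearOrder X le] :
    LinearOrder X where
  le := le
  le_refl := refl_of le
  le_trans _ _ _ := trans_of le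
  le_antisymm _ _ := antisymm_of le
  le_total := total_of le
  toDecidableLE := Classical.decRel le

theorem exists_isLinearOrder_forall_le [Finite X] (f : (X → X → Prop) → ℝ) :
    ∃ le, IsLinearOrder X le ∧ ∀ le', IsLinearOrder X le' → f le ≤ f le' :=
  let := IsWellOrder.linearOrder (WellOrderingRel (α := X))
  Set.exists_min_image {le | IsLinearOrder X le} f (Set.toFinite _)
    ⟨(· ≤ ·), inferInstanceAs (IsLinearOrder X (· ≤ ·))⟩

section linfDist

variable [Fintype X] [Nonempty X] {d d' : X → X → ℝ} {ε : ℝ}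

theorem abs_sub_le_linfDist (d d' : X → X → ℝ) (x y : X) : |d x y - d' x y| ≤ linfDist d d' :=
  le_sup' (fun p : X × X => |d p.1 p.2 - d' p.1 p.2|) (mem_univ (x, y))

theorem linfDist_nonneg (d d' : X → X → ℝ) : 0 ≤ linfDist d d' :=
  (abs_nonneg _).trans (abs_sub_le_linfDist d d' ‹Nonempty X›.some ‹Nonempty X›.some)

theorem linfDist_le (h : ∀ x y, |d x y - d' x y| ≤ ε) : linfDist d d' ≤ ε :=
  sup'_le _ _ fun p _ => h p.1 p.2

theorem EpsCompatible.of_linfDist {le : X → X → Prop} (h : EpsCompatible d' le ε) :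
    EpsCompatible d le (ε + linfDist d d') := by
  intro x u v y hxu huv hvy
  have huv' := abs_sub_le_linfDist d d' u v
  have hxy' := abs_sub_le_linfDist d d' x y
  rw [abs_le] at huv' hxy'
  linarith [h x u v y hxu huv hvy]

end linfDist

section defect

variable [Fintype X] [Nonempty X] (d : X → X → ℝ) (le : X → X → Prop)

open Classical

noncomputable def halfExcess : X × X × X × X → ℝ
  | (x, u, v, y) => if le x u ∧ le u v ∧ le v y then (d u v - d x y) / 2 else 0

noncomputable def compatibilityDefect : ℝ :=
  univ.sup' univ_nonempty (halfExcess d le)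

theorem compatibilityDefect_nonneg : 0 ≤ compatibilityDefect d le := by
  obtain ⟨x⟩ := ‹Nonempty X›
  refine le_trans ?_ (le_sup' (halfExcess d le) (mem_univ (x, x, x, x)))
  simp only [halfExcess]
  split_ifs <;> simp

theorem epsCompatible_compatibilityDefect : EpsCompatible d le (compatibilityDefect d le) := by
  intro x u v y hxu huv hvy
  have := le_sup' (halfExcess d le) (mem_univ (x, u, v, y))
  rw [halfExcess, if_pos ⟨hxu, huv, hvy⟩] at this
  unfold compatibilityDefect
  linarith

variable {d le} in
theorem compatibilityDefect_le {ε : ℝ} (hε : 0 ≤ ε) (h : EpsCompatible d le ε) :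
    compatibilityDefect d le ≤ ε := by
  refine sup'_le _ _ fun ⟨x, u, v, y⟩ _ => ?_
  rw [halfExcess]
  split_ifs with hq
  · linarith [h x u v y hq.1 hq.2.1 hq.2.2]
  · exact hε

theorem exists_compatibilityDefect_eq :
    ∃ x y x' y' : X, compatibilityDefect d le = |d x y - d x' y'| / 2 := by
  obtain ⟨⟨x, u, v, y⟩, -, hq⟩ := exists_mem_eq_sup' univ_nonempty (halfExcess d le)
  have hnonneg := compatibilityDefect_nonneg d le
  rw [← compatibilityDefect, halfExcess] at hq
  split_ifs at hq
  · refine ⟨u, v, x, y, ?_⟩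
    rw [hq, abs_of_nonneg (by linarith)]
  · exact ⟨x, x, x, x, by simp [hq]⟩

end defect

section uIccDiam

variable [LinearOrder X] [LocallyFiniteOrder X] {d : X → X → ℝ} {x y u v : X}

noncomputable def uIccDiam (d : X → X → ℝ) (u v : X) : ℝ :=
  (uIcc u v ×ˢ uIcc u v).sup' (nonempty_uIcc.product nonempty_uIcc) fun p => d p.1 p.2

theorem uIccDiam_comm (d : X → X → ℝ) (u v : X) : uIccDiam d u v = uIccDiam d v u := by
  simp only [uIccDiam, uIcc_comm u v]

theorem le_uIccDiam (d : X → X → ℝ) (u v : X) : d u v ≤ uIccDiam d u v :=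
  le_sup' (fun p : X × X => d p.1 p.2) (b := (u, v))
    (mem_product.2 ⟨left_mem_uIcc, right_mem_uIcc⟩)

theorem uIccDiam_mono (hu : u ∈ uIcc x y) (hv : v ∈ uIcc x y) :
    uIccDiam d u v ≤ uIccDiam d x y :=
  have hsub := uIcc_subset_uIcc hu hv
  sup'_mono _ (product_subset_product hsub hsub) _

theorem uIccDiam_self (hd : ∀ x, d x x = 0) (x : X) : uIccDiam d x x = 0 := by
  simp [uIccDiam, hd]

theorem uIccDiam_le_add {ε : ℝ} (hsymm : ∀ x y, d x y = d y x)
    (h : EpsCompatible d (· ≤ ·) ε) (hxy : x ≤ y) : uIccDiam d x y ≤ d x y + 2 * ε := by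
  refine sup'_le _ _ fun ⟨a, b⟩ hab => ?_
  simp only [mem_product, uIcc_of_le hxy, mem_Icc] at hab
  obtain ⟨⟨hxa, hay⟩, hxb, hby⟩ := hab
  rcases le_total a b with hle | hle
  · exact h x a b y hxa hle hby
  · rw [hsymm]
    exact h x b a y hxb hle hay

theorem exists_compatible_linfDist_le [Fintype X] [Nonempty X] {ε : ℝ} (hd : IsDissimilarity d)
    (hε : 0 ≤ ε) (h : EpsCompatible d (· ≤ ·) ε) :
    ∃ dR, IsDissimilarity dR ∧ EpsCompatible dR (· ≤ ·) 0 ∧ linfDist d dR ≤ ε := by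
  obtain ⟨hsymm, hnonneg, hdiag⟩ := hd
  set dR : X → X → ℝ := fun u v => max 0 (uIccDiam d u v - ε)
  have hdR_symm : ∀ u v, dR u v = dR v u := fun u v => by simp only [dR, uIccDiam_comm d u v]
  have hclose : ∀ x y, x ≤ y → |d x y - dR x y| ≤ ε := fun x y hxy => by
    have hlow := le_uIccDiam d x y
    have hhigh := uIccDiam_le_add hsymm h hxy
    have hmax : max 0 (uIccDiam d x y - ε) ≤ d x y + ε :=
      max_le (by linarith [hnonneg x y]) (by linarith)
    rw [abs_le]
    constructor <;> linarith [le_max_right 0 (uIccDiam d x y - ε)]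
  refine ⟨dR, ⟨hdR_symm, fun _ _ => le_max_left _ _, fun x => ?_⟩, ?_, linfDist_le ?_⟩
  · simp [dR, uIccDiam_self hdiag, hε]
  · intro x u v y hxu huv hvy
    have hu : u ∈ uIcc x y := mem_uIcc'.2 (.inl ⟨hxu, huv.trans hvy⟩)
    have hv : v ∈ uIcc x y := mem_uIcc'.2 (.inl ⟨hxu.trans huv, hvy⟩)
    simpa [dR] using max_le_max_left 0 (sub_le_sub_right (uIccDiam_mono (d := d) hu hv) ε)
  · intro x y
    rcases le_total x y with hxy | hyx
    · exact hclose x y hxy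
    · rw [hsymm, hdR_symm]
      exact hclose y x hyx

end uIccDiam

/-- There is a Robinsonian dissimilarity `d_R` closest to `d` in `l∞`-distance, and the
minimum value `‖d - d_R‖∞` is of the form `½ |d x y - d x' y'|` for some `x, y, x', y'`. -/
theorem exists_closest_robinsonian [Fintype X] [Nonempty X]
    (d : X → X → ℝ) (hd : IsDissimilarity d) :
    ∃ dR : X → X → ℝ, IsDissimilarity dR ∧ IsRobinsonian dR ∧
      (∀ d' : X → X → ℝ, IsDissimilarity d' → IsRobinsonian d' →
        linfDist d dR ≤ linfDist d d') ∧
      ∃ x y x' y' : X, linfDist d dR = |d x y - d x' y'| / 2 := by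
  obtain ⟨le, hle, hmin⟩ := exists_isLinearOrder_forall_le (compatibilityDefect d)
  let := IsLinearOrder.toLinearOrder le
  let := Fintype.toLocallyFiniteOrder (α := X)
  obtain ⟨dR, hdR, hcompat, hdist⟩ := exists_compatible_linfDist_le hd
    (compatibilityDefect_nonneg d le) (epsCompatible_compatibilityDefect d le)
  have hlower : ∀ d', IsRobinsonian d' → compatibilityDefect d le ≤ linfDist d d' := by
    rintro d' ⟨le', hle', hcompat'⟩
    refine (hmin le' hle').trans (compatibilityDefect_le (linfDist_nonneg d d') ?_)
    simpa using hcompat'.of_linfDist (d := d)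
  have hrob : IsRobinsonian dR := ⟨le, hle, hcompat⟩
  have heq : linfDist d dR = compatibilityDefect d le := hdist.antisymm (hlower dR hrob)
  obtain ⟨x, y, x', y', hxy⟩ := exists_compatibilityDefect_eq d le
  exact ⟨dR, hdR, hrob, fun d' _ hd' => hdist.trans (hlower d' hd'), x, y, x', y', heq.trans hxy⟩
end

section
/- In the standing setup (canonical partial order ≼, maximal chain P, holes, pair admissibility with the standing assumption, and the sets X_ij), let x, x', y ∈ X_ij be such that x and x' belong to a common cell of L→_ij while y belongs to a different block than x and x'. Then there is no linear order ≺ on X that is ε-compatible with d and satisfies x ≺ y ≺ x'. -/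
open Finset

variable {X : Type*}

/-- The canonical relation `≼` determined by `d`, `ε` and the base pair `(p, q)`:
the smallest reflexive and transitive relation containing `(p, q)` and closed under the
betweenness rules coming from triplets `x, z, y` with `d x y > max (d x z) (d z y) + 2ε`. -/
inductive Canon (d : X → X → ℝ) (ε : ℝ) (p q : X) : X → X → Prop
  | base : Canon d ε p q p q
  | refl (x : X) : Canon d ε p q x x
  | trans {x y z : X} : Canon d ε p q x y → Canon d ε p q y z → Canon d ε p q x z
  | rule1 {x y z : X} (h : d x y > max (d x z) (d z y) + 2 * ε)
      (hxz : Canon d ε p q x z) : Canon d ε p q z y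
  | rule2 {x y z : X} (h : d x y > max (d x z) (d z y) + 2 * ε)
      (hzy : Canon d ε p q z y) : Canon d ε p q x z
  | rule3a {x y z : X} (h : d x y > max (d x z) (d z y) + 2 * ε)
      (hxy : Canon d ε p q x y) : Canon d ε p q x z
  | rule3b {x y z : X} (h : d x y > max (d x z) (d z y) + 2 * ε)
      (hxy : Canon d ε p q x y) : Canon d ε p q z y
  | rule4 {x y z : X} (h : d x y > max (d x z) (d z y) + 2 * ε)
      (hzx : Canon d ε p q z x) : Canon d ε p q y z
  | rule5 {x y z : X} (h : d x y > max (d x z) (d z y) + 2 * ε)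
      (hyz : Canon d ε p q y z) : Canon d ε p q z x
  | rule6a {x y z : X} (h : d x y > max (d x z) (d z y) + 2 * ε)
      (hyx : Canon d ε p q y x) : Canon d ε p q y z
  | rule6b {x y z : X} (h : d x y > max (d x z) (d z y) + 2 * ε)
      (hyx : Canon d ε p q y x) : Canon d ε p q z x

/-- `x ? y` : `x` and `y` are incomparable for the canonical relation. -/
def CanonIncomp (d : X → X → ℝ) (ε : ℝ) (p q x y : X) : Prop :=
  ¬ Canon d ε p q x y ∧ ¬ Canon d ε p q y x

/-- `x ∈ X° = X \ P`, where `P = {a 0, …, a (n-1)}`. -/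
def OutsideChain (a : ℕ → X) (n : ℕ) (x : X) : Prop := ∀ i, i < n → a i ≠ x

/-- The standing setup: `d` is a dissimilarity, `ε ≥ 0`, the canonical relation `≼`
determined by `d`, `ε` and the distinct base pair `(p₀, q₀)` is antisymmetric (a partial
order), `a 0 ≼ a 1 ≼ … ≼ a (n-1)` is a maximal (by inclusion) chain of `(X, ≼)`, and
`a 0 ≼ x ≼ a (n-1)` for every `x ∈ X`. -/
structure RobinsonSetup (d : X → X → ℝ) (ε : ℝ) (p₀ q₀ : X) (a : ℕ → X) (n : ℕ) : Prop where
  dissim : IsDissimilarity d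
  eps_nonneg : 0 ≤ ε
  base_ne : p₀ ≠ q₀
  antisymm : ∀ x y, Canon d ε p₀ q₀ x y → Canon d ε p₀ q₀ y x → x = y
  npos : 0 < n
  chain : ∀ i j, i < j → j < n → Canon d ε p₀ q₀ (a i) (a j) ∧ a i ≠ a j
  maximal : ∀ x, OutsideChain a n x →
      ∃ i, i < n ∧ ¬ Canon d ε p₀ q₀ (a i) x ∧ ¬ Canon d ε p₀ q₀ x (a i)
  lower : ∀ x, Canon d ε p₀ q₀ (a 0) x
  upper : ∀ x, Canon d ε p₀ q₀ x (a (n - 1))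

/-- `i(x)`: the largest index `i < n` with `a i ≼ x`. -/
noncomputable def iIdx (d : X → X → ℝ) (ε : ℝ) (p₀ q₀ : X) (a : ℕ → X) (n : ℕ) (x : X) : ℕ :=
  sSup {i | i < n ∧ Canon d ε p₀ q₀ (a i) x}

/-- `j(x)`: the smallest index `j < n` with `x ≼ a j`. -/
noncomputable def jIdx (d : X → X → ℝ) (ε : ℝ) (p₀ q₀ : X) (a : ℕ → X) (n : ℕ) (x : X) : ℕ :=
  sInf {j | j < n ∧ Canon d ε p₀ q₀ x (a j)}

/-- `ε`-compatibility of the linear order given by the first `m` entries of the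
sequence `b` (with the relevant dissimilarity restricted to those entries). -/
def SeqCompatible (d : X → X → ℝ) (b : ℕ → X) (m : ℕ) (ε : ℝ) : Prop :=
  ∀ q r s t : ℕ, q ≤ r → r ≤ s → s ≤ t → t < m → d (b r) (b s) ≤ d (b q) (b t) + 2 * ε

/-- The sequence on `P ∪ {x}` obtained by inserting `x` into the hole `H k`,
i.e. between `a k` and `a (k+1)`. -/
def insertSeq (a : ℕ → X) (x : X) (k : ℕ) : ℕ → X := fun m =>
  if m ≤ k then a m else if m = k + 1 then x else a (m - 1)

/-- The sequence on `P ∪ {x, y}` obtained by inserting `x` into the hole `H k` and `y`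
into the hole `H k'`, where `k ≤ k'` (and `x` placed before `y` if `k = k'`). -/
def insertSeq2 (a : ℕ → X) (x y : X) (k k' : ℕ) : ℕ → X := fun m =>
  if m ≤ k then a m
  else if m = k + 1 then x
  else if m ≤ k' + 1 then a (m - 1)
  else if m = k' + 2 then y
  else a (m - 2)

/-- The hole `H k` is `x`-admissible: the linear order on `P ∪ {x}` obtained by inserting
`x` between `a k` and `a (k+1)` is `ε`-compatible with (the restriction of) `d`. -/
def HoleAdmissible (d : X → X → ℝ) (ε : ℝ) (a : ℕ → X) (n : ℕ) (x : X) (k : ℕ) : Prop :=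
  SeqCompatible d (insertSeq a x k) (n + 1) ε

/-- The pair of holes `(H k, H k')` is `(x, y, c)`-admissible. -/
def PairHoleAdmissible (d : X → X → ℝ) (ε : ℝ) (a : ℕ → X) (n : ℕ)
    (x y : X) (k k' : ℕ) (c : ℝ) : Prop :=
  HoleAdmissible d ε a n x k ∧ HoleAdmissible d ε a n y k' ∧
    ((k ≤ k' ∧ SeqCompatible d (insertSeq2 a x y k k') (n + 2) (c * ε)) ∨
     (k' ≤ k ∧ SeqCompatible d (insertSeq2 a y x k' k) (n + 2) (c * ε)))

/-- `d_x`: the mean of `min {d x (a k) : i < k < j}` and `max {d x (a k) : i < k < j}`. -/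
noncomputable def dxVal (d : X → X → ℝ) (a : ℕ → X) (x : X) (i j : ℕ) : ℝ :=
  (sInf {r | ∃ k, i < k ∧ k < j ∧ r = d x (a k)} +
    sSup {r | ∃ k, i < k ∧ k < j ∧ r = d x (a k)}) / 2

/-- Standing assumption: for all distinct `z, w ∈ X°` and each bounding hole `H k` of `z`
there is a `w`-admissible hole `H k'` such that `(H k, H k')` is `(z, w, 1)`-admissible. -/
def StandingAssumption (d : X → X → ℝ) (ε : ℝ) (p₀ q₀ : X) (a : ℕ → X) (n : ℕ) : Prop :=
  ∀ z w, z ≠ w → OutsideChain a n z → OutsideChain a n w →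
    ∀ k, (k = iIdx d ε p₀ q₀ a n z ∨ k = jIdx d ε p₀ q₀ a n z - 1) →
      ∃ k', iIdx d ε p₀ q₀ a n w ≤ k' ∧ k' ≤ jIdx d ε p₀ q₀ a n w - 1 ∧
        PairHoleAdmissible d ε a n z w k k' 1

/-- `x ∈ X_ij`. -/
def InXij (d : X → X → ℝ) (ε : ℝ) (p₀ q₀ : X) (a : ℕ → X) (n i j : ℕ) (x : X) : Prop :=
  OutsideChain a n x ∧ iIdx d ε p₀ q₀ a n x = i ∧ jIdx d ε p₀ q₀ a n x = j

/-- `{x, y} ∈ L_ij` : `d x y < max (d_x) (d_y) - 3ε`. -/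
def LPair (d : X → X → ℝ) (ε : ℝ) (a : ℕ → X) (i j : ℕ) (x y : X) : Prop :=
  d x y < max (dxVal d a x i j) (dxVal d a y i j) - 3 * ε

/-- `x` and `y` lie in a common block: same connected component of the graph `(X_ij, L_ij)`. -/
def SameBlock (d : X → X → ℝ) (ε : ℝ) (p₀ q₀ : X) (a : ℕ → X) (n i j : ℕ) (x y : X) : Prop :=
  Relation.ReflTransGen
    (fun u v => InXij d ε p₀ q₀ a n i j u ∧ InXij d ε p₀ q₀ a n i j v ∧ LPair d ε a i j u v)
    x y

/-- `x ↣ y` : rule (A1) or (A2). -/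
def ArrowRel (d : X → X → ℝ) (ε : ℝ) (p₀ q₀ : X) (a : ℕ → X) (n i j : ℕ) (x y : X) : Prop :=
  dxVal d a x i j < dxVal d a y i j - 4 * ε ∨
    (dxVal d a y i j - 4 * ε ≤ dxVal d a x i j ∧
      ∃ z, InXij d ε p₀ q₀ a n i j z ∧ ¬ LPair d ε a i j x z ∧ ¬ LPair d ε a i j y z ∧
        d x z < d y z - 16 * ε)

/-- The arc `x → y` of the directed graph `L→_ij` : rule (L1) or (L2). -/
def LArc (d : X → X → ℝ) (ε : ℝ) (p₀ q₀ : X) (a : ℕ → X) (n i j : ℕ) (x y : X) : Prop :=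
  InXij d ε p₀ q₀ a n i j x ∧ InXij d ε p₀ q₀ a n i j y ∧
    ((ArrowRel d ε p₀ q₀ a n i j x y ∧ SameBlock d ε p₀ q₀ a n i j x y) ∨
      d x y < max (dxVal d a x i j) (dxVal d a y i j) - 5 * ε)

/-- `x` and `y` lie in a common cell: same strongly connected component of `L→_ij`. -/
def SameCell (d : X → X → ℝ) (ε : ℝ) (p₀ q₀ : X) (a : ℕ → X) (n i j : ℕ) (x y : X) : Prop :=
  Relation.ReflTransGen (LArc d ε p₀ q₀ a n i j) x y ∧
    Relation.ReflTransGen (LArc d ε p₀ q₀ a n i j) y x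

/-! The inner chain elements `a k`, `i < k < j`, act as a ruler: by the standing assumption both
bounding holes of every `w ∈ X_ij` are admissible, which forces `d w (a k)` to lie within `ε`
of `d_w`. Along a path of `L→_ij` from `x` to `x'` some arc jumps over `y`; since `y` is not
`L`-adjacent to the block of `x`, that arc must be of type (L1), and the arrow condition then
pushes its head past all inner chain elements. Running the same argument on the reversed order
along the path from `x'` back to `x` gives a second element of the same block lying before all
inner chain elements. But an `L`-edge of a block cannot jump over an inner chain element, so a
block lies on one side of each of them: a contradiction. -/

open Function (swap)
open Relation

theorem Relation.ReflTransGen.exists_step_of_not {α : Type*} {r : α → α → Prop}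
    {p : α → Prop} {s t : α} (h : ReflTransGen r s t) (hs : p s) (ht : ¬ p t) :
    ∃ u v, ReflTransGen r s u ∧ r u v ∧ p u ∧ ¬ p v := by
  induction h with
  | refl => exact absurd hs ht
  | @tail b c hsb hbc ih =>
    by_cases hb : p b
    · exact ⟨b, c, hsb, hbc, hb, ht⟩
    · exact ih hb

theorem abs_sub_midpoint_le {S : Set ℝ} {δ r : ℝ} (hS : ∀ s ∈ S, ∀ t ∈ S, s ≤ t + 2 * δ)
    (hr : r ∈ S) : |r - (sInf S + sSup S) / 2| ≤ δ := by
  have hne : S.Nonempty := ⟨r, hr⟩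
  have hinf : sInf S ≤ r := csInf_le ⟨r - 2 * δ, fun s hs => by linarith [hS r hr s hs]⟩ hr
  have hsup : r ≤ sSup S := le_csSup ⟨r + 2 * δ, fun s hs => hS s hs r hr⟩ hr
  have hspread : sSup S ≤ sInf S + 2 * δ :=
    csSup_le hne fun s hs => by
      linarith [le_csInf hne fun t ht => show s - 2 * δ ≤ t by linarith [hS s hs t ht]]
  rw [abs_le]
  constructor <;> linarith

section Order

variable {d : X → X → ℝ} {le : X → X → Prop} {ε : ℝ}

theorem EpsCompatible.swap (hd : ∀ u v, d u v = d v u) (h : EpsCompatible d le ε) :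
    EpsCompatible d (swap le) ε := fun x u v y hxu huv hvy => by
  rw [hd u v, hd x y]
  exact h y v u x hvy huv hxu

theorem EpsCompatible.max_sub_le_of_between [Std.Refl le] (h : EpsCompatible d le ε)
    {u m v : X} {r s c : ℝ} (hum : le u m) (hmv : le m v) (hu : r - c ≤ d u m)
    (hv : s - c ≤ d m v) : max r s - c - 2 * ε ≤ d u v := by
  have hum' := h u u m v (refl u) hum hmv
  have hmv' := h u m v v hum hmv (refl v)
  have : max r s ≤ d u v + 2 * ε + c := max_le (by linarith) (by linarith)
  linarith

end Order

section Holes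

variable {d : X → X → ℝ} {ε : ℝ} {a : ℕ → X} {n : ℕ} {w : X}

theorem insertSeq_of_le {k m : ℕ} (h : m ≤ k) : insertSeq a w k m = a m := if_pos h

theorem insertSeq_succ_self (k : ℕ) : insertSeq a w k (k + 1) = w := by
  simp [insertSeq]

theorem insertSeq_succ_of_lt {k m : ℕ} (h : k < m) : insertSeq a w k (m + 1) = a m := by
  simp [insertSeq, show ¬ m + 1 ≤ k by omega, show m ≠ k by omega]

theorem HoleAdmissible.dist_le_of_right {h k k' : ℕ} (hadm : HoleAdmissible d ε a n w h)
    (hk : h < k) (hkk' : k ≤ k') (hk' : k' < n) : d w (a k) ≤ d w (a k') + 2 * ε := by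
  have := hadm (h + 1) (h + 1) (k + 1) (k' + 1) le_rfl (by omega) (by omega) (by omega)
  rwa [insertSeq_succ_self, insertSeq_succ_of_lt hk, insertSeq_succ_of_lt (hk.trans_le hkk')]
    at this

theorem HoleAdmissible.dist_le_of_left {h k k' : ℕ} (hadm : HoleAdmissible d ε a n w h)
    (hk'k : k' ≤ k) (hk : k ≤ h) (hh : h < n) : d (a k) w ≤ d (a k') w + 2 * ε := by
  have := hadm k' k (h + 1) (h + 1) hk'k (by omega) le_rfl (by omega)
  rwa [insertSeq_succ_self, insertSeq_of_le hk, insertSeq_of_le (hk'k.trans hk)] at this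

theorem abs_dist_sub_dxVal_le (hd : ∀ u v, d u v = d v u) {i j k : ℕ}
    (hleft : HoleAdmissible d ε a n w i) (hright : HoleAdmissible d ε a n w (j - 1))
    (hj : j ≤ n) (hik : i < k) (hkj : k < j) : |d w (a k) - dxVal d a w i j| ≤ ε := by
  refine abs_sub_midpoint_le ?_ ⟨k, hik, hkj, rfl⟩
  rintro _ ⟨k₁, hik₁, hk₁j, rfl⟩ _ ⟨k₂, hik₂, hk₂j, rfl⟩
  rcases le_total k₁ k₂ with h | h
  · exact hleft.dist_le_of_right hik₁ h (by omega)
  · rw [hd w, hd w]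
    exact hright.dist_le_of_left h (by omega) (by omega)

end Holes

section Blocks

variable {d : X → X → ℝ} {ε : ℝ} {p₀ q₀ : X} {a : ℕ → X} {n i j : ℕ}

def NearInnerChain (d : X → X → ℝ) (ε : ℝ) (a : ℕ → X) (i j : ℕ) (w : X) : Prop :=
  ∀ k, i < k → k < j → |d w (a k) - dxVal d a w i j| ≤ ε

theorem StandingAssumption.nearInnerChain (hst : StandingAssumption d ε p₀ q₀ a n)
    (hd : ∀ u v, d u v = d v u) (hj : j ≤ n) {w w' : X} (hw : InXij d ε p₀ q₀ a n i j w)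
    (hw' : OutsideChain a n w') (hne : w ≠ w') : NearInnerChain d ε a i j w := by
  obtain ⟨-, -, -, hleft, -⟩ := hst w w' hne hw.1 hw' i (Or.inl hw.2.1.symm)
  obtain ⟨-, -, -, hright, -⟩ := hst w w' hne hw.1 hw' (j - 1) (Or.inr (by rw [hw.2.2]))
  exact fun k hik hkj => abs_dist_sub_dxVal_le hd hleft hright hj hik hkj

theorem LPair.symm (hd : ∀ u v, d u v = d v u) {u v : X} (h : LPair d ε a i j u v) :
    LPair d ε a i j v u := by
  rwa [LPair, hd, max_comm]

theorem SameBlock.symm (hd : ∀ u v, d u v = d v u) {u v : X}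
    (h : SameBlock d ε p₀ q₀ a n i j u v) : SameBlock d ε p₀ q₀ a n i j v u := by
  have : Std.Symm fun u v =>
      InXij d ε p₀ q₀ a n i j u ∧ InXij d ε p₀ q₀ a n i j v ∧ LPair d ε a i j u v :=
    ⟨fun _ _ ⟨hu, hv, huv⟩ => ⟨hv, hu, huv.symm hd⟩⟩
  exact Std.Symm.symm (r := ReflTransGen _) u v h

theorem SameBlock.of_reflTransGen_lArc (hε : 0 ≤ ε) {u v : X}
    (h : ReflTransGen (LArc d ε p₀ q₀ a n i j) u v) : SameBlock d ε p₀ q₀ a n i j u v := by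
  refine reflTransGen_closed (fun u v huv => ?_) u v h
  obtain ⟨hu, hv, ⟨-, hblock⟩ | hclose⟩ := huv
  · exact hblock
  · exact .single ⟨hu, hv, by unfold LPair; linarith⟩

theorem ArrowRel.not_le_chain [Std.Refl le] [Std.Total le] (hd : ∀ u v, d u v = d v u)
    (hε : 0 ≤ ε) (hcomp : EpsCompatible d le ε)
    (hnear : ∀ w, InXij d ε p₀ q₀ a n i j w → NearInnerChain d ε a i j w) {u v : X}
    (harrow : ArrowRel d ε p₀ q₀ a n i j u v) (hu : InXij d ε p₀ q₀ a n i j u)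
    (hv : InXij d ε p₀ q₀ a n i j v) (huv : le u v) {k : ℕ} (hik : i < k) (hkj : k < j) :
    ¬ le v (a k) := by
  intro hvk
  rcases harrow with hdx | ⟨-, z, hz, hfar, -, hdz⟩
  · have := hcomp u v (a k) (a k) huv hvk (refl _)
    have hnu := abs_le.mp (hnear u hu k hik hkj)
    have hnv := abs_le.mp (hnear v hv k hik hkj)
    linarith [hnu.2, hnv.1]
  · have hzv : le z v := (total_of le z v).resolve_right fun hvz => by
      linarith [hcomp u v z z huv hvz (refl _)]
    have := hcomp z z v (a k) (refl _) hzv hvk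
    have hnz := abs_le.mp (hnear z hz k hik hkj)
    have hfar' : max (dxVal d a u i j) (dxVal d a z i j) - 3 * ε ≤ d u z := not_lt.mp hfar
    linarith [hnz.2, hd z v, le_max_right (dxVal d a u i j) (dxVal d a z i j)]

theorem exists_sameBlock_not_le_chain [IsPreorder X le] [Std.Total le]
    (hd : ∀ u v, d u v = d v u) (hε : 0 ≤ ε) (hcomp : EpsCompatible d le ε)
    (hnear : ∀ w, InXij d ε p₀ q₀ a n i j w → NearInnerChain d ε a i j w) {s t y : X}
    (hpath : ReflTransGen (LArc d ε p₀ q₀ a n i j) s t) (hsy : le s y) (hty : ¬ le t y)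
    (hy : InXij d ε p₀ q₀ a n i j y) (hblock : ¬ SameBlock d ε p₀ q₀ a n i j s y) :
    ∃ v, SameBlock d ε p₀ q₀ a n i j s v ∧ ∀ k, i < k → k < j → ¬ le v (a k) := by
  obtain ⟨u, v, hsu, huv, huy, hvy⟩ := hpath.exists_step_of_not (p := fun w => le w y) hsy hty
  have hyv : le y v := (total_of le v y).resolve_left hvy
  have hsu' := SameBlock.of_reflTransGen_lArc hε hsu
  have hsv := SameBlock.of_reflTransGen_lArc hε (hsu.tail huv)
  refine ⟨v, hsv, fun k hik hkj => ?_⟩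
  obtain ⟨hu, hv, ⟨harrow, -⟩ | hclose⟩ := huv
  · exact harrow.not_le_chain hd hε hcomp hnear hu hv (_root_.trans huy hyv) hik hkj
  · have hfar : ∀ w, InXij d ε p₀ q₀ a n i j w → SameBlock d ε p₀ q₀ a n i j s w →
        max (dxVal d a w i j) (dxVal d a y i j) - 3 * ε ≤ d w y := fun w hw hsw =>
      not_lt.mp fun hL => hblock (hsw.tail ⟨hw, hy, hL⟩)
    have hfu := hfar u hu hsu'
    have hfv := hfar v hv hsv
    have := hcomp.max_sub_le_of_between huy hyv
      (r := dxVal d a u i j) (s := dxVal d a v i j) (c := 3 * ε)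
      (by linarith [le_max_left (dxVal d a u i j) (dxVal d a y i j)])
      (by linarith [hd v y, le_max_left (dxVal d a v i j) (dxVal d a y i j)])
    linarith

theorem SameBlock.chain_le [Std.Refl le] [Std.Total le] (hd : ∀ u v, d u v = d v u)
    (hcomp : EpsCompatible d le ε)
    (hnear : ∀ w, InXij d ε p₀ q₀ a n i j w → NearInnerChain d ε a i j w) {v v' : X}
    (h : SameBlock d ε p₀ q₀ a n i j v v') {k : ℕ} (hik : i < k) (hkj : k < j)
    (hv : le (a k) v) : le (a k) v' := by
  by_contra hv'
  obtain ⟨w, w', -, ⟨hw, hw', hL⟩, hkw, hkw'⟩ := h.exists_step_of_not hv hv'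
  have hw'k : le w' (a k) := (total_of le (a k) w').resolve_left hkw'
  have hnw := abs_le.mp (hnear w hw k hik hkj)
  have hnw' := abs_le.mp (hnear w' hw' k hik hkj)
  have := hcomp.max_sub_le_of_between hw'k hkw
    (r := dxVal d a w' i j) (s := dxVal d a w i j) (c := ε)
    (by linarith [hd w' (a k)]) (by linarith [hd (a k) w])
  have hL' : d w w' < max (dxVal d a w' i j) (dxVal d a w i j) - 3 * ε := by
    rwa [LPair, max_comm] at hL
  linarith [hd w w']

end Blocks

theorem no_order_between_cells_general (d : X → X → ℝ) (ε : ℝ) (p₀ q₀ : X) (a : ℕ → X) (n : ℕ)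
    (hs : RobinsonSetup d ε p₀ q₀ a n)
    (hstand : StandingAssumption d ε p₀ q₀ a n)
    (i j : ℕ) (hij : i + 2 ≤ j) (hj : j < n)
    (x x' y : X) (hx : InXij d ε p₀ q₀ a n i j x)
    (hy : InXij d ε p₀ q₀ a n i j y)
    (hcell : SameCell d ε p₀ q₀ a n i j x x')
    (hblock : ¬ SameBlock d ε p₀ q₀ a n i j x y)
    (hblock' : ¬ SameBlock d ε p₀ q₀ a n i j x' y) :
    ¬ ∃ le : X → X → Prop, IsLinearOrder X le ∧ EpsCompatible d le ε ∧
        (le x y ∧ x ≠ y) ∧ (le y x' ∧ y ≠ x') := by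
  rintro ⟨le, hlin, hcomp, ⟨hxy, hxy_ne⟩, hyx', hyx'_ne⟩
  have hd := hs.dissim.1
  have hε := hs.eps_nonneg
  have hnear (w : X) (hw : InXij d ε p₀ q₀ a n i j w) : NearInnerChain d ε a i j w := by
    by_cases hwx : w = x
    · exact hstand.nearInnerChain hd hj.le hw hy.1 (hwx ▸ hxy_ne)
    · exact hstand.nearInnerChain hd hj.le hw hx.1 hwx
  obtain ⟨v, hxv, hv⟩ := exists_sameBlock_not_le_chain hd hε hcomp hnear hcell.1 hxy
    (fun hx'y => hyx'_ne (antisymm hyx' hx'y)) hy hblock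
  obtain ⟨v', hx'v', hv'⟩ := exists_sameBlock_not_le_chain (le := swap le) hd hε
    (hcomp.swap hd) hnear hcell.2 hyx' (fun hyx => hxy_ne (antisymm hxy hyx)) hy hblock'
  have hvv' : SameBlock d ε p₀ q₀ a n i j v v' :=
    (hxv.symm hd).trans ((SameBlock.of_reflTransGen_lArc hε hcell.1).trans hx'v')
  have hk : i < i + 1 := i.lt_succ_self
  have hkj : i + 1 < j := by omega
  exact hv' (i + 1) hk hkj (hvv'.chain_le hd hcomp hnear hk hkj
    ((total_of le v (a (i + 1))).resolve_left (hv (i + 1) hk hkj)))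

/-- If `x, x'` belong to a common cell but `y` belongs to a different block than `x, x'`,
then no `ε`-compatible linear order satisfies `x ≺ y ≺ x'`. -/
theorem no_order_between_cells (d : X → X → ℝ) (ε : ℝ) (p₀ q₀ : X) (a : ℕ → X) (n : ℕ)
    (hs : RobinsonSetup d ε p₀ q₀ a n)
    (hstand : StandingAssumption d ε p₀ q₀ a n)
    (i j : ℕ) (hij : i + 2 ≤ j) (hj : j < n)
    (x x' y : X) (hx : InXij d ε p₀ q₀ a n i j x) (hx' : InXij d ε p₀ q₀ a n i j x')
    (hy : InXij d ε p₀ q₀ a n i j y)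
    (hcell : SameCell d ε p₀ q₀ a n i j x x')
    (hblock : ¬ SameBlock d ε p₀ q₀ a n i j x y)
    (hblock' : ¬ SameBlock d ε p₀ q₀ a n i j x' y) :
    ¬ ∃ le : X → X → Prop, IsLinearOrder X le ∧ EpsCompatible d le ε ∧
        (le x y ∧ x ≠ y) ∧ (le y x' ∧ y ≠ x') :=
  no_order_between_cells_general d ε p₀ q₀ a n hs hstand i j hij hj x x' y hx hy hcell hblock
    hblock'
end
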